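/- Let G ∈ 𝒞𝒢^s(n) with 2 ≤ s ≤ n−3, let v* be a vertex of minimum degree t of G, set X = N(v*), Y = V(G) ∖ N[v*], and suppose G[Y] ≅ K_{n−t−1} with n−t−1 ≥ 2 while G[X] is not complete. If x, x' ∈ X are non-adjacent, then N_Y(x) ⊆ N_Y(x') or N_Y(x') ⊆ N_Y(x); furthermore, if N_Y(x) ⊊ N_Y(x'), then |N_Y(x)| = 1 and N_Y(x') = Y. -/

import Mathlib

open Matrix BigOperators

namespace TwoPosEig

variable {V : Type*}

/-- The real adjacency matrix of a simple graph (classical decidability). -/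
noncomputable def adjMat [Fintype V] [DecidableEq V] (G : SimpleGraph V) : Matrix V V ℝ :=
  letI := Classical.decRel G.Adj
  G.adjMatrix ℝ

lemma adjMat_isHermitian [Fintype V] [DecidableEq V] (G : SimpleGraph V) :
    (adjMat G).IsHermitian := by
  letI := Classical.decRel G.Adj
  rw [Matrix.IsHermitian, Matrix.conjTranspose_eq_transpose_of_trivial]
  exact SimpleGraph.isSymm_adjMatrix G

/-- The eigenvalues of (the adjacency matrix of) a graph, as a function on vertices. -/
noncomputable def eigs [Fintype V] [DecidableEq V] (G : SimpleGraph V) : V → ℝ :=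
  (adjMat_isHermitian G).eigenvalues

/-- `p(G)`: the number of positive eigenvalues (with multiplicity). -/
noncomputable def posCount [Finite V] (G : SimpleGraph V) : ℕ :=
  letI := Fintype.ofFinite V
  letI := Classical.decEq V
  Nat.card {i : V // 0 < eigs G i}

/-- `η(G)`: the number of zero eigenvalues (with multiplicity), the nullity. -/
noncomputable def nullCount [Finite V] (G : SimpleGraph V) : ℕ :=
  letI := Fintype.ofFinite V
  letI := Classical.decEq V
  Nat.card {i : V // eigs G i = 0}

/-- `λ_k(G)`: the `k`-th largest eigenvalue (1-indexed); junk value `0` out of range. -/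
noncomputable def lam [Finite V] (G : SimpleGraph V) (k : ℕ) : ℝ :=
  letI := Fintype.ofFinite V
  letI := Classical.decEq V
  (((Finset.univ.val.map (eigs G)).sort (· ≤ ·)).reverse).getD (k - 1) 0

/-- Membership in `𝒢^s(n)` (the order `n` being the cardinality of the vertex type):
`p(G) = 2` and `η(G) = s`. -/
def memClass [Finite V] (s : ℕ) (G : SimpleGraph V) : Prop :=
  posCount G = 2 ∧ nullCount G = s

/-- `v` is a congruent vertex of I-type: some other vertex `u`, non-adjacent to `v`,
has the same neighbourhood. -/
def ITypeVertex (G : SimpleGraph V) (v : V) : Prop :=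
  ∃ u, u ≠ v ∧ ¬ G.Adj u v ∧ G.neighborSet u = G.neighborSet v

/-- `u` is a congruent vertex of II-type: there are two non-adjacent vertices `v, w`
such that `N(u)` is a disjoint union of `N(v)` and `N(w)`. -/
def IITypeVertex (G : SimpleGraph V) (u : V) : Prop :=
  ∃ v w, v ≠ w ∧ ¬ G.Adj v w ∧ Disjoint (G.neighborSet v) (G.neighborSet w) ∧
    G.neighborSet u = G.neighborSet v ∪ G.neighborSet w

/-- `u v x y` is a congruent (induced) quadrangle with congruent edges `uv`, `xy`. -/
def CongruentQuad (G : SimpleGraph V) (u v x y : V) : Prop :=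
  u ≠ v ∧ u ≠ x ∧ u ≠ y ∧ v ≠ x ∧ v ≠ y ∧ x ≠ y ∧
  G.Adj u v ∧ G.Adj v x ∧ G.Adj x y ∧ G.Adj y u ∧ ¬ G.Adj u x ∧ ¬ G.Adj v y ∧
  G.neighborSet u \ {y, v} = G.neighborSet v \ {u, x} ∧
  G.neighborSet x \ {v, y} = G.neighborSet y \ {x, u}

/-- A congruent vertex of III-type: a vertex of some congruent quadrangle. -/
def IIITypeVertex (G : SimpleGraph V) (z : V) : Prop :=
  ∃ u v x y, CongruentQuad G u v x y ∧ (z = u ∨ z = v ∨ z = x ∨ z = y)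

/-- Membership in `𝒢_1^s(n)`: a connected graph obtained by adding a congruent vertex
of I-type to some graph in `𝒢^{s-1}(n-1)`. -/
def memG1 {n : ℕ} (s : ℕ) (G : SimpleGraph (Fin n)) : Prop :=
  G.Connected ∧ ∃ v : Fin n, ITypeVertex G v ∧ memClass (s - 1) (G.induce {v}ᶜ)

/-- Membership in `𝒢_2^s(n)`. -/
def memG2 {n : ℕ} (s : ℕ) (G : SimpleGraph (Fin n)) : Prop :=
  G.Connected ∧ ∃ v : Fin n, IITypeVertex G v ∧ memClass (s - 1) (G.induce {v}ᶜ)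

/-- Membership in `𝒢_3^s(n)`. -/
def memG3 {n : ℕ} (s : ℕ) (G : SimpleGraph (Fin n)) : Prop :=
  G.Connected ∧ ∃ v : Fin n, IIITypeVertex G v ∧ memClass (s - 1) (G.induce {v}ᶜ)

/-- Oboudi's graph `G_m`: two cliques `K_{⌈m/2⌉}` (on `v_1, …`) and `K_{⌊m/2⌋}`
(on `w_1, …`), where `v_i ∼ w_j` iff `j ≥ ⌊m/2⌋ - i + 2` (1-indexed), i.e. (0-indexed)
`⌊m/2⌋ ≤ i + j`. -/
def oboudi (m : ℕ) : SimpleGraph (Fin ((m + 1) / 2) ⊕ Fin (m / 2)) :=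
  SimpleGraph.fromRel fun a b =>
    match a, b with
    | Sum.inl _, Sum.inl _ => True
    | Sum.inr _, Sum.inr _ => True
    | Sum.inl i, Sum.inr j => m / 2 ≤ (i : ℕ) + (j : ℕ)
    | Sum.inr _, Sum.inl _ => False

/-- The generalized lexicographic product `G[K_{t v}]`: each vertex `v` is replaced by a
clique of order `t v`, with complete joins along edges of `G`. -/
def lexProd (G : SimpleGraph V) (t : V → ℕ) : SimpleGraph (Σ v : V, Fin (t v)) :=
  SimpleGraph.fromRel fun a b => a.1 = b.1 ∨ G.Adj a.1 b.1

/-- Index conversion identifying the vertices `v_1, …, v_{⌈k/2⌉}, w_1, …, w_{⌊k/2⌋}`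
of `G_k` with `Fin k` (in this order). -/
def toIdx {k : ℕ} : Fin ((k + 1) / 2) ⊕ Fin (k / 2) → Fin k
  | Sum.inl i => ⟨(i : ℕ), by have := i.isLt; omega⟩
  | Sum.inr j => ⟨(k + 1) / 2 + (j : ℕ), by have := j.isLt; omega⟩

/-- `B_k(n_1, …, n_k) = G_k[K_{n_1}, …, K_{n_k}]`. -/
def bGraph (k : ℕ) (nn : Fin k → ℕ) :
    SimpleGraph (Σ v : Fin ((k + 1) / 2) ⊕ Fin (k / 2), Fin (nn (toIdx v))) :=
  lexProd (oboudi k) fun v => nn (toIdx v)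

/-- Membership in `𝓓* = {B_k(n_1,…,n_k) ∈ 𝓑_k^{00}(n) : 4 ≤ k ≤ 14, n ≤ 14}` (up to
isomorphism). -/
def memDstar {n : ℕ} (G : SimpleGraph (Fin n)) : Prop :=
  ∃ (k : ℕ) (nn : Fin k → ℕ), 4 ≤ k ∧ k ≤ 14 ∧ (∀ i, 1 ≤ nn i) ∧ (∑ i, nn i) ≤ 14 ∧
    lam (bGraph k nn) 3 = 0 ∧ lam (bGraph k nn) 4 = 0 ∧ Nonempty (G ≃g bGraph k nn)

/-- The degree of a vertex. -/
noncomputable def deg [Finite V] (G : SimpleGraph V) (v : V) : ℕ :=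
  Nat.card (G.neighborSet v)

/-- `v` is a vertex of minimum degree. -/
def IsMinDegVertex [Finite V] (G : SimpleGraph V) (v : V) : Prop :=
  ∀ w, deg G v ≤ deg G w

/-- The set `Y = V(G) ∖ N[v]`. -/
def Yset (G : SimpleGraph V) (v : V) : Set V :=
  (G.neighborSet v ∪ {v})ᶜ

/-- `G` is `X`-complete with respect to `v`: `G[Y] ≅ K_{n-t-1}` with `n-t-1 ≥ 2`
and `G[X]` is complete, where `X = N(v)`, `Y = V(G) ∖ N[v]`. -/
def IsXComplete [Finite V] (G : SimpleGraph V) (v : V) : Prop :=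
  2 ≤ (Yset G v).ncard ∧ (Yset G v).Pairwise G.Adj ∧ (G.neighborSet v).Pairwise G.Adj

/-- An `X`-complete graph is reduced when the traces on `Y` of the neighbourhoods of
vertices of `X` form a chain. -/
def IsReduced (G : SimpleGraph V) (v : V) : Prop :=
  ∀ x ∈ G.neighborSet v, ∀ x' ∈ G.neighborSet v,
    G.neighborSet x ∩ Yset G v ⊆ G.neighborSet x' ∩ Yset G v ∨
    G.neighborSet x' ∩ Yset G v ⊆ G.neighborSet x ∩ Yset G v

end TwoPosEig

/-!
The number of positive eigenvalues of a real symmetric matrix `A` is the largest dimension of a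
subspace on which `xᵀAx` is positive definite. The adjacency matrix of an induced subgraph is a
principal submatrix, so `p` cannot grow on passing to induced subgraphs, and a graph with
`p(G) = 2` induces neither the pentagon nor two particular six-vertex graphs, each of which has
three positive eigenvalues. Incomparable traces would give `y ∈ N_Y(x) ∖ N_Y(x')` and
`y' ∈ N_Y(x') ∖ N_Y(x)`, and `v x y y' x'` would be an induced pentagon. If `N_Y(x) ⊊ N_Y(x')`,
then `N_Y(x) ≠ ∅`, as otherwise `deg x ≤ deg v - 1`; a second vertex of `N_Y(x)`, or a vertex of
`Y ∖ N_Y(x')`, would then induce one of the six-vertex graphs.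
-/

theorem Matrix.card_le_card_pos_of_posDef_transpose_mul_diagonal_mul {ι κ : Type*} [Fintype ι]
    [DecidableEq ι] [Fintype κ] {d : ι → ℝ} {T : Matrix ι κ ℝ}
    (hT : (Tᵀ * diagonal d * T).PosDef) : Fintype.card κ ≤ Fintype.card {i // 0 < d i} := by
  by_contra! hlt
  let F : (κ → ℝ) →ₗ[ℝ] ({i // 0 < d i} → ℝ) :=
    LinearMap.funLeft ℝ ℝ Subtype.val ∘ₗ T.mulVecLin
  obtain ⟨c, hcF, hc⟩ := Submodule.exists_mem_ne_zero_of_ne_bot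
    (LinearMap.ker_ne_bot_of_finrank_lt (f := F) (by simpa using hlt))
  have hvanish : ∀ i, 0 < d i → (T *ᵥ c) i = 0 := fun i hi => congrFun hcF ⟨i, hi⟩
  have hform : star c ⬝ᵥ ((Tᵀ * diagonal d * T) *ᵥ c) = ∑ i, d i * (T *ᵥ c) i ^ 2 := by
    rw [star_trivial, ← mulVec_mulVec, ← mulVec_mulVec, dotProduct_mulVec, vecMul_transpose]
    simp only [dotProduct, mulVec_diagonal]
    exact Finset.sum_congr rfl fun i _ => by ring
  have hnonpos : ∑ i, d i * (T *ᵥ c) i ^ 2 ≤ 0 := Finset.sum_nonpos fun i _ => by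
    rcases lt_or_ge 0 (d i) with hi | hi
    · simp [hvanish i hi]
    · exact mul_nonpos_of_nonpos_of_nonneg hi (sq_nonneg _)
  linarith [hT.dotProduct_mulVec_pos hc]

namespace Matrix.IsHermitian

variable {ι : Type*} [Fintype ι] [DecidableEq ι] {A : Matrix ι ι ℝ} (hA : A.IsHermitian)
include hA

theorem transpose_mul_mul_eigenvectorUnitary :
    (hA.eigenvectorUnitary : Matrix ι ι ℝ)ᵀ * A * hA.eigenvectorUnitary =
      diagonal hA.eigenvalues := by
  simpa [Unitary.conjStarAlgAut_apply, star_eq_conjTranspose] using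
    hA.conjStarAlgAut_star_eigenvectorUnitary

theorem card_le_card_pos_eigenvalues {κ : Type*} [Fintype κ] {S : Matrix ι κ ℝ}
    (hS : (Sᵀ * A * S).PosDef) : Fintype.card κ ≤ Fintype.card {i // 0 < hA.eigenvalues i} := by
  set U : Matrix ι ι ℝ := (hA.eigenvectorUnitary : Matrix ι ι ℝ)
  have hA' : A = U * diagonal hA.eigenvalues * Uᵀ := by
    simpa [Unitary.conjStarAlgAut_apply, star_eq_conjTranspose] using hA.spectral_theorem
  apply card_le_card_pos_of_posDef_transpose_mul_diagonal_mul (T := Uᵀ * S)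
  convert hS using 1
  simp only [hA', transpose_mul, transpose_transpose, Matrix.mul_assoc]

theorem exists_posDef_transpose_mul_mul :
    ∃ S : Matrix ι {i // 0 < hA.eigenvalues i} ℝ, (Sᵀ * A * S).PosDef := by
  set U : Matrix ι ι ℝ := (hA.eigenvectorUnitary : Matrix ι ι ℝ)
  set e : {i // 0 < hA.eigenvalues i} → ι := Subtype.val
  have hrestrict : (Uᵀ * A * U).submatrix e e = (U.submatrix id e)ᵀ * A * U.submatrix id e := by
    rw [submatrix_mul _ _ _ id _ Function.bijective_id,
      submatrix_mul _ _ _ id _ Function.bijective_id, submatrix_id_id, transpose_submatrix]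
  have hdiag : (diagonal hA.eigenvalues).submatrix e e = diagonal (hA.eigenvalues ∘ e) :=
    submatrix_diagonal_embedding _ (Function.Embedding.subtype _)
  refine ⟨U.submatrix id e, ?_⟩
  rw [← hrestrict, hA.transpose_mul_mul_eigenvectorUnitary, hdiag]
  exact PosDef.diagonal fun i => i.2

end Matrix.IsHermitian

theorem Matrix.transpose_mul_mul_submatrix_one {V W : Type*} [Fintype V] [DecidableEq V]
    (A : Matrix V V ℝ) (f : W → V) :
    ((1 : Matrix V V ℝ).submatrix id f)ᵀ * A * (1 : Matrix V V ℝ).submatrix id f =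
      A.submatrix f f := by
  ext i j
  simp [mul_apply, one_apply]

namespace TwoPosEig

variable {V W : Type*}

open Classical in
theorem adjMat_apply [Fintype V] [DecidableEq V] (G : SimpleGraph V) (i j : V) :
    adjMat G i j = if G.Adj i j then 1 else 0 := by
  simp only [adjMat, SimpleGraph.adjMatrix_apply]

theorem adjMat_comap [Fintype V] [DecidableEq V] [Fintype W] [DecidableEq W]
    (G : SimpleGraph V) (f : W → V) : adjMat (G.comap f) = (adjMat G).submatrix f f :=
  rfl

theorem posCount_eq_card [Fintype V] [DecidableEq V] (G : SimpleGraph V) :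
    posCount G = Fintype.card {i // 0 < (adjMat_isHermitian G).eigenvalues i} := by
  rw [posCount, Nat.card_eq_fintype_card]
  unfold eigs
  convert rfl

theorem le_posCount_of_posDef [Fintype V] [DecidableEq V] {κ : Type*} [Fintype κ]
    (G : SimpleGraph V) {S : Matrix V κ ℝ} (hS : (Sᵀ * adjMat G * S).PosDef) :
    Fintype.card κ ≤ posCount G :=
  posCount_eq_card G ▸ (adjMat_isHermitian G).card_le_card_pos_eigenvalues hS

theorem posCount_comap_le [Finite V] [Finite W] (G : SimpleGraph V) (f : W → V) :
    posCount (G.comap f) ≤ posCount G := by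
  classical
  have := Fintype.ofFinite V
  have := Fintype.ofFinite W
  obtain ⟨S, hS⟩ := (adjMat_isHermitian (G.comap f)).exists_posDef_transpose_mul_mul
  rw [posCount_eq_card]
  set P : Matrix V W ℝ := (1 : Matrix V V ℝ).submatrix id f
  have hgram : (P * S)ᵀ * adjMat G * (P * S) = Sᵀ * (Pᵀ * adjMat G * P) * S := by
    simp only [transpose_mul, Matrix.mul_assoc]
  refine le_posCount_of_posDef G (S := P * S) ?_
  rwa [hgram, transpose_mul_mul_submatrix_one, ← adjMat_comap]

theorem le_posCount_of_mul_adjMat_mul_transpose_eq_diagonal [Fintype V] [DecidableEq V]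
    {κ : Type*} [Fintype κ] [DecidableEq κ] (G : SimpleGraph V) (B : Matrix κ V ℝ) {d : κ → ℝ}
    (hd : ∀ i, 0 < d i) (hB : B * adjMat G * Bᵀ = diagonal d) : Fintype.card κ ≤ posCount G :=
  le_posCount_of_posDef G (S := Bᵀ) (by rw [transpose_transpose, hB]; exact PosDef.diagonal hd)

/-- The vertices are `v, x, x', y₁, y₂, y'`, with `N_Y(x) = {y₁, y₂} ⊊ N_Y(x') = Y`. -/
def forbiddenGraph₁ : SimpleGraph (Fin 6) :=
  SimpleGraph.fromEdgeSet {s(0, 1), s(0, 2), s(1, 3), s(1, 4), s(2, 3), s(2, 4), s(2, 5),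
    s(3, 4), s(3, 5), s(4, 5)}

/-- The vertices are `v, x, x', y, y', y₀`, with `N_Y(x) = {y} ⊊ N_Y(x') = {y, y'} ⊊ Y`. -/
def forbiddenGraph₂ : SimpleGraph (Fin 6) :=
  SimpleGraph.fromEdgeSet {s(0, 1), s(0, 2), s(1, 3), s(2, 3), s(2, 4), s(3, 4), s(3, 5),
    s(4, 5)}

theorem adjMat_cycleGraph_five :
    adjMat (SimpleGraph.cycleGraph 5) =
      !![0, 1, 0, 0, 1; 1, 0, 1, 0, 0; 0, 1, 0, 1, 0; 0, 0, 1, 0, 1; 1, 0, 0, 1, 0] := by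
  ext i j
  fin_cases i <;> fin_cases j <;> simp [adjMat_apply, SimpleGraph.cycleGraph_adj] <;> decide

theorem adjMat_forbiddenGraph₁ :
    adjMat forbiddenGraph₁ =
      !![0, 1, 1, 0, 0, 0; 1, 0, 0, 1, 1, 0; 1, 0, 0, 1, 1, 1;
        0, 1, 1, 0, 1, 1; 0, 1, 1, 1, 0, 1; 0, 0, 1, 1, 1, 0] := by
  ext i j
  fin_cases i <;> fin_cases j <;> simp [adjMat_apply, forbiddenGraph₁]

theorem adjMat_forbiddenGraph₂ :
    adjMat forbiddenGraph₂ =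
      !![0, 1, 1, 0, 0, 0; 1, 0, 0, 1, 0, 0; 1, 0, 0, 1, 1, 0;
        0, 1, 1, 0, 1, 1; 0, 0, 1, 1, 0, 1; 0, 0, 0, 1, 1, 0] := by
  ext i j
  fin_cases i <;> fin_cases j <;> simp [adjMat_apply, forbiddenGraph₂]

/- The three rows of each certificate below are pairwise orthogonal for the adjacency form, which
takes the value `2` on each of them. -/

theorem three_le_posCount_cycleGraph_five : 3 ≤ posCount (SimpleGraph.cycleGraph 5) := by
  simpa using le_posCount_of_mul_adjMat_mul_transpose_eq_diagonal _
    !![0, 0, 0, 1, 1; 0, 1, 1, 0, -1; 1, 1, -1, -1, 1] (d := fun _ => 2) (fun _ => two_pos) (by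
      rw [adjMat_cycleGraph_five]
      ext i j
      fin_cases i <;> fin_cases j <;> simp [mul_apply, Fin.sum_univ_succ] <;> norm_num)

theorem three_le_posCount_forbiddenGraph₁ : 3 ≤ posCount forbiddenGraph₁ := by
  simpa using le_posCount_of_mul_adjMat_mul_transpose_eq_diagonal _
    !![0, 0, 0, 1, 1, 0; 0, 2, -1, 0, 0, -1; 2, -1, 2, -1, -1, 0] (d := fun _ => 2)
    (fun _ => two_pos) (by
      rw [adjMat_forbiddenGraph₁]
      ext i j
      fin_cases i <;> fin_cases j <;> simp [mul_apply, Fin.sum_univ_succ] <;> norm_num)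

theorem three_le_posCount_forbiddenGraph₂ : 3 ≤ posCount forbiddenGraph₂ := by
  simpa using le_posCount_of_mul_adjMat_mul_transpose_eq_diagonal _
    !![0, 0, 0, 0, 1, 1; 1, 1, 0, 0, 0, 0; 1, -2, 2, -1, 1, -1] (d := fun _ => 2)
    (fun _ => two_pos) (by
      rw [adjMat_forbiddenGraph₂]
      ext i j
      fin_cases i <;> fin_cases j <;> simp [mul_apply, Fin.sum_univ_succ] <;> norm_num)

theorem comap_eq_of_forall_lt {k : ℕ} {G : SimpleGraph V} {H : SimpleGraph (Fin k)}
    (f : Fin k → V) (h : ∀ i j, i < j → (G.Adj (f i) (f j) ↔ H.Adj i j)) : G.comap f = H := by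
  ext i j
  rcases lt_trichotomy i j with hij | rfl | hij
  · exact h i j hij
  · simp
  · rw [SimpleGraph.comap_adj, G.adj_comm, H.adj_comm]
    exact h j i hij

section Traces

variable {G : SimpleGraph V} {v x x' : V}

theorem mem_Yset {y : V} : y ∈ Yset G v ↔ y ≠ v ∧ ¬ G.Adj v y := by
  simp [Yset]

variable [Finite V]

theorem neighborSet_inter_Yset_subset_or_subset (hp : posCount G ≤ 2)
    (hY : (Yset G v).Pairwise G.Adj) (hx : G.Adj v x) (hx' : G.Adj v x') (hxx' : ¬ G.Adj x x') :
    G.neighborSet x ∩ Yset G v ⊆ G.neighborSet x' ∩ Yset G v ∨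
      G.neighborSet x' ∩ Yset G v ⊆ G.neighborSet x ∩ Yset G v := by
  by_contra! h
  obtain ⟨y, ⟨hxy, hy⟩, hx'y⟩ := Set.not_subset.1 h.1
  obtain ⟨y', ⟨hx'y', hy'⟩, hxy'⟩ := Set.not_subset.1 h.2
  have hyy' : G.Adj y y' := hY hy hy' (by rintro rfl; exact hxy' ⟨hxy, hy⟩)
  have hyx' : ¬ G.Adj y x' := fun hyx' => hx'y ⟨hyx'.symm, hy⟩
  have hC5 : G.comap ![v, x, y, y', x'] = SimpleGraph.cycleGraph 5 := by
    have := (mem_Yset.1 hy).2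
    have := (mem_Yset.1 hy').2
    refine comap_eq_of_forall_lt _ fun i j hij => ?_
    fin_cases i <;> fin_cases j <;>
      simp_all [SimpleGraph.cycleGraph_adj, hx'y'.symm] <;> decide
  have := hC5 ▸ posCount_comap_le G ![v, x, y, y', x']
  have := three_le_posCount_cycleGraph_five
  omega

theorem nonempty_neighborSet_inter_Yset (hv : IsMinDegVertex G v) (hx : G.Adj v x)
    (hx' : G.Adj v x') (hne : x ≠ x') (hxx' : ¬ G.Adj x x') :
    (G.neighborSet x ∩ Yset G v).Nonempty := by
  by_contra! h
  have hsub : G.neighborSet x ⊆ insert v (G.neighborSet v) \ {x, x'} := by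
    intro u hu
    refine ⟨?_, ?_⟩
    · by_contra hu'
      exact h.subset ⟨hu, by simpa [Yset, or_comm] using hu'⟩
    · rintro (rfl | rfl)
      exacts [G.irrefl hu, hxx' hu]
  have hpair : {x, x'} ⊆ insert v (G.neighborSet v) := by
    rintro _ (rfl | rfl)
    exacts [Or.inr hx, Or.inr hx']
  have hcard := Set.ncard_le_ncard hsub
  rw [Set.ncard_sdiff hpair, Set.ncard_insert_of_notMem G.notMem_neighborSet_self,
    Set.ncard_pair hne] at hcard
  have hdeg := hv x
  simp only [deg, Nat.card_coe_set_eq] at hdeg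
  have : 0 < (G.neighborSet v).ncard := (Set.ncard_pos).2 ⟨x, hx⟩
  omega

theorem ncard_neighborSet_inter_Yset_eq_one (hp : posCount G ≤ 2)
    (hY : (Yset G v).Pairwise G.Adj) (hx : G.Adj v x) (hx' : G.Adj v x') (hxx' : ¬ G.Adj x x')
    (hxY : (G.neighborSet x ∩ Yset G v).Nonempty)
    (hss : G.neighborSet x ∩ Yset G v ⊂ G.neighborSet x' ∩ Yset G v) :
    (G.neighborSet x ∩ Yset G v).ncard = 1 := by
  obtain ⟨y₁, hy₁⟩ := hxY
  refine Set.ncard_eq_one.2 ⟨y₁, Set.eq_singleton_iff_unique_mem.2 ⟨hy₁, fun y₂ hy₂ => ?_⟩⟩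
  by_contra hne
  obtain ⟨y', ⟨hx'y', hy'⟩, hxy'⟩ := Set.exists_of_ssubset hss
  obtain ⟨hxy₁, hy₁Y⟩ := hy₁
  obtain ⟨hxy₂, hy₂Y⟩ := hy₂
  have hx'y₁ := (hss.subset ⟨hxy₁, hy₁Y⟩).1
  have hx'y₂ := (hss.subset ⟨hxy₂, hy₂Y⟩).1
  have hy₁y₂ : G.Adj y₁ y₂ := hY hy₁Y hy₂Y (Ne.symm hne)
  have hy₁y' : G.Adj y₁ y' := hY hy₁Y hy' (by rintro rfl; exact hxy' ⟨hxy₁, hy₁Y⟩)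
  have hy₂y' : G.Adj y₂ y' := hY hy₂Y hy' (by rintro rfl; exact hxy' ⟨hxy₂, hy₂Y⟩)
  have hH : G.comap ![v, x, x', y₁, y₂, y'] = forbiddenGraph₁ := by
    have := (mem_Yset.1 hy₁Y).2
    have := (mem_Yset.1 hy₂Y).2
    have := (mem_Yset.1 hy').2
    refine comap_eq_of_forall_lt _ fun i j hij => ?_
    fin_cases i <;> fin_cases j <;> simp_all [forbiddenGraph₁]
  have := hH ▸ posCount_comap_le G ![v, x, x', y₁, y₂, y']
  have := three_le_posCount_forbiddenGraph₁
  omega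

theorem neighborSet_inter_Yset_eq_Yset (hp : posCount G ≤ 2)
    (hY : (Yset G v).Pairwise G.Adj) (hx : G.Adj v x) (hx' : G.Adj v x') (hxx' : ¬ G.Adj x x')
    (hxY : (G.neighborSet x ∩ Yset G v).Nonempty)
    (hss : G.neighborSet x ∩ Yset G v ⊂ G.neighborSet x' ∩ Yset G v) :
    G.neighborSet x' ∩ Yset G v = Yset G v := by
  refine Set.inter_eq_right.2 fun y₀ hy₀ => ?_
  by_contra hx'y₀
  obtain ⟨y, hxy, hy⟩ := hxY
  obtain ⟨y', ⟨hx'y', hy'⟩, hxy'⟩ := Set.exists_of_ssubset hss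
  have hx'y := (hss.subset ⟨hxy, hy⟩).1
  have hxy₀ : ¬ G.Adj x y₀ := fun h => hx'y₀ (hss.subset ⟨h, hy₀⟩).1
  have hyy' : G.Adj y y' := hY hy hy' (by rintro rfl; exact hxy' ⟨hxy, hy⟩)
  have hyy₀ : G.Adj y y₀ := hY hy hy₀ (by rintro rfl; exact hx'y₀ hx'y)
  have hy'y₀ : G.Adj y' y₀ := hY hy' hy₀ (by rintro rfl; exact hx'y₀ hx'y')
  have hH : G.comap ![v, x, x', y, y', y₀] = forbiddenGraph₂ := by
    have := (mem_Yset.1 hy).2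
    have := (mem_Yset.1 hy').2
    have := (mem_Yset.1 hy₀).2
    refine comap_eq_of_forall_lt _ fun i j hij => ?_
    fin_cases i <;> fin_cases j <;> simp_all [forbiddenGraph₂]
  have := hH ▸ posCount_comap_le G ![v, x, x', y, y', y₀]
  have := three_le_posCount_forbiddenGraph₂
  omega

end Traces

theorem Xincomplete_chain_general {n s : ℕ}
    (G : SimpleGraph (Fin n)) (hG : memClass s G)
    (v : Fin n) (hv : IsMinDegVertex G v)
    (X Y : Set (Fin n)) (hX : X = G.neighborSet v) (hY : Y = Yset G v)
    (hYcl : Y.Pairwise G.Adj)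
    (x x' : Fin n) (hx : x ∈ X) (hx' : x' ∈ X) (hnadj : ¬ G.Adj x x') :
    (G.neighborSet x ∩ Y ⊆ G.neighborSet x' ∩ Y ∨
      G.neighborSet x' ∩ Y ⊆ G.neighborSet x ∩ Y) ∧
    (G.neighborSet x ∩ Y ⊂ G.neighborSet x' ∩ Y →
      (G.neighborSet x ∩ Y).ncard = 1 ∧ G.neighborSet x' ∩ Y = Y) := by
  subst hX hY
  have hp : posCount G ≤ 2 := hG.1.le
  refine ⟨neighborSet_inter_Yset_subset_or_subset hp hYcl hx hx' hnadj, fun hss => ?_⟩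
  have hne : x ≠ x' := by
    rintro rfl
    exact hss.ne rfl
  have hxY := nonempty_neighborSet_inter_Yset hv hx hx' hne hnadj
  exact ⟨ncard_neighborSet_inter_Yset_eq_one hp hYcl hx hx' hnadj hxY hss,
    neighborSet_inter_Yset_eq_Yset hp hYcl hx hx' hnadj hxY hss⟩

theorem Xincomplete_chain {n s : ℕ} (hs : 2 ≤ s) (hsn : s ≤ n - 3)
    (G : SimpleGraph (Fin n)) (hconn : G.Connected) (hG : memClass s G)
    (v : Fin n) (hv : IsMinDegVertex G v)
    (X Y : Set (Fin n)) (hX : X = G.neighborSet v) (hY : Y = Yset G v)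
    (hYcl : Y.Pairwise G.Adj) (hYcard : 2 ≤ Y.ncard) (hXinc : ¬ X.Pairwise G.Adj)
    (x x' : Fin n) (hx : x ∈ X) (hx' : x' ∈ X) (hne : x ≠ x') (hnadj : ¬ G.Adj x x') :
    (G.neighborSet x ∩ Y ⊆ G.neighborSet x' ∩ Y ∨
      G.neighborSet x' ∩ Y ⊆ G.neighborSet x ∩ Y) ∧
    (G.neighborSet x ∩ Y ⊂ G.neighborSet x' ∩ Y →
      (G.neighborSet x ∩ Y).ncard = 1 ∧ G.neighborSet x' ∩ Y = Y) :=
  Xincomplete_chain_general G hG v hv X Y hX hY hYcl x x' hx hx' hnadj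

end TwoPosEig
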